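/- First-term bound in the proof of Lemma 3.3: there exists a constant C > 0 independent of N such that for every N ≥ 1, every multiplier m_N as in the context, and every v ∈ H^{1/2}(ℝ;ℂ), one has | Im ∫_ℝ ( \overline{I_N v} · ∂_x(I_N v) − \overline{v} · ∂_x v ) dx | ≤ C N^{−1} ‖I_N v‖_{H^1}². -/

import Mathlib

/-!
For `|ξ| ≤ N` the multiplier is `1` and the two momentum densities agree. For `|ξ| > N`,
monotonicity gives `m(ξ)² ≥ m(2|ξ|)² = N / (2|ξ|)`, hence
`|ξ| (1 - m(ξ)²) ≤ |ξ| ≤ (1 + ξ²) / |ξ| ≤ 2 N⁻¹ (1 + ξ²) m(ξ)²`.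
Integrating against `‖v̂‖²` gives the bound with `C = 4π`; the `H^{1/2}` hypothesis, together
with `m(ξ)² = N / |ξ|` for `|ξ| > 2N`, makes every integral involved finite.
-/

open MeasureTheory Real Complex
open scoped FourierTransform

noncomputable section

/-- `m` is an I-method multiplier at level `N`: a smooth, even, radially
nonincreasing function with `0 < m(ξ) ≤ 1`, `m(ξ) = 1` for `|ξ| ≤ N`, and
`m(ξ) = N^{1/2} |ξ|^{-1/2}` for `|ξ| > 2N`. -/
def IsIMultiplier (N : ℝ) (m : ℝ → ℝ) : Prop :=
  ContDiff ℝ (⊤ : ℕ∞) m ∧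
  (∀ ξ : ℝ, m (-ξ) = m ξ) ∧
  (∀ ξ η : ℝ, |ξ| ≤ |η| → m η ≤ m ξ) ∧
  (∀ ξ : ℝ, 0 < m ξ ∧ m ξ ≤ 1) ∧
  (∀ ξ : ℝ, |ξ| ≤ N → m ξ = 1) ∧
  (∀ ξ : ℝ, 2 * N < |ξ| → m ξ = N ^ ((1 : ℝ) / 2) * |ξ| ^ (-(1 : ℝ) / 2))

/-- The `Hˢ` norm computed from a given Fourier transform `g`:
`(∫ (1+|ξ|²)^s ‖g(ξ)‖² dξ)^{1/2}`. -/
def sobNormOfHat (s : ℝ) (g : ℝ → ℂ) : ℝ :=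
  (∫ ξ : ℝ, (1 + |ξ| ^ 2) ^ s * ‖g ξ‖ ^ 2) ^ ((1 : ℝ) / 2)

lemma sobNormOfHat_sq (s : ℝ) (g : ℝ → ℂ) :
    sobNormOfHat s g ^ 2 = ∫ ξ : ℝ, (1 + |ξ| ^ 2) ^ s * ‖g ξ‖ ^ 2 := by
  rw [sobNormOfHat, ← Real.sqrt_eq_rpow, Real.sq_sqrt (integral_nonneg fun ξ => by positivity)]

namespace IsIMultiplier

variable {N : ℝ} {m : ℝ → ℝ}

lemma pos (hm : IsIMultiplier N m) (ξ : ℝ) : 0 < m ξ := (hm.2.2.2.1 ξ).1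

lemma sq_le_one (hm : IsIMultiplier N m) (ξ : ℝ) : m ξ ^ 2 ≤ 1 :=
  pow_le_one₀ (hm.pos ξ).le (hm.2.2.2.1 ξ).2

lemma sq_eq_div (hm : IsIMultiplier N m) (hN : 0 ≤ N) {ξ : ℝ} (hξ : 2 * N < |ξ|) :
    m ξ ^ 2 = N / |ξ| := by
  have hξ0 : 0 < |ξ| := by linarith
  rw [hm.2.2.2.2.2 ξ hξ, mul_pow, ← Real.rpow_natCast, ← Real.rpow_natCast,
    ← Real.rpow_mul hN, ← Real.rpow_mul hξ0.le]
  norm_num [Real.rpow_neg_one, div_eq_mul_inv]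

lemma div_le_sq (hm : IsIMultiplier N m) (hN : 0 ≤ N) {ξ : ℝ} (hξ : N < |ξ|) :
    N / (2 * |ξ|) ≤ m ξ ^ 2 := by
  have h2ξ : |(2 * |ξ|)| = 2 * |ξ| := abs_of_nonneg (by positivity)
  have hmono : m (2 * |ξ|) ≤ m ξ := hm.2.2.1 ξ _ (by rw [h2ξ]; linarith [abs_nonneg ξ])
  calc N / (2 * |ξ|) = m (2 * |ξ|) ^ 2 := by
        rw [hm.sq_eq_div hN (by rw [h2ξ]; linarith), h2ξ]
    _ ≤ m ξ ^ 2 := pow_le_pow_left₀ (hm.pos _).le hmono 2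

lemma abs_mul_one_sub_sq_le (hm : IsIMultiplier N m) (hN : 0 < N) (ξ : ℝ) :
    |ξ| * (1 - m ξ ^ 2) ≤ 2 * N⁻¹ * ((1 + ξ ^ 2) * m ξ ^ 2) := by
  rcases le_or_gt |ξ| N with hξ | hξ
  · rw [hm.2.2.2.2.1 ξ hξ, one_pow, sub_self, mul_zero]
    positivity
  · have hξ0 : 0 < |ξ| := hN.trans hξ
    calc |ξ| * (1 - m ξ ^ 2) ≤ |ξ| :=
          mul_le_of_le_one_right hξ0.le (by linarith [sq_nonneg (m ξ)])
      _ ≤ (1 + ξ ^ 2) / |ξ| := by rw [le_div_iff₀ hξ0, ← sq, sq_abs]; linarith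
      _ = 2 * N⁻¹ * ((1 + ξ ^ 2) * (N / (2 * |ξ|))) := by field_simp
      _ ≤ 2 * N⁻¹ * ((1 + ξ ^ 2) * m ξ ^ 2) := by
        gcongr
        exact hm.div_le_sq hN.le hξ

lemma one_add_sq_mul_sq_le (hm : IsIMultiplier N m) (hN : 0 < N) (ξ : ℝ) :
    (1 + ξ ^ 2) * m ξ ^ 2 ≤ (1 + 2 * N) * √(1 + ξ ^ 2) := by
  rcases le_or_gt |ξ| (2 * N) with hξ | hξ
  · have hS : √(1 + ξ ^ 2) ≤ 1 + |ξ| :=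
      Real.sqrt_le_iff.2 ⟨by positivity, by nlinarith [sq_abs ξ, abs_nonneg ξ]⟩
    calc (1 + ξ ^ 2) * m ξ ^ 2 ≤ 1 + ξ ^ 2 :=
          mul_le_of_le_one_right (by positivity) (hm.sq_le_one ξ)
      _ = √(1 + ξ ^ 2) * √(1 + ξ ^ 2) := (Real.mul_self_sqrt (by positivity)).symm
      _ ≤ (1 + 2 * N) * √(1 + ξ ^ 2) := by gcongr; linarith
  · have hξ0 : 0 < |ξ| := by linarith
    have hS1 : 1 ≤ √(1 + ξ ^ 2) := Real.one_le_sqrt.2 (by nlinarith)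
    have hξS : |ξ| * |ξ| ≤ √(1 + ξ ^ 2) * |ξ| :=
      mul_le_mul_of_nonneg_right (Real.abs_le_sqrt (by linarith)) hξ0.le
    rw [hm.sq_eq_div hN.le hξ, mul_div_assoc', div_le_iff₀ hξ0]
    nlinarith [mul_le_mul_of_nonneg_left hξS hN.le, sq_abs ξ]

end IsIMultiplier

section Integrability

variable {α : Type*} [MeasurableSpace α] {μ : Measure α}

lemma aestronglyMeasurable_of_mul_left {w g : α → ℝ}
    (hwg : AEStronglyMeasurable (fun x => w x * g x) μ) (hw : Measurable w)
    (hw0 : ∀ x, w x ≠ 0) : AEStronglyMeasurable g μ :=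
  (hw.inv.aestronglyMeasurable.mul hwg).congr <|
    ae_of_all _ fun x => inv_mul_cancel_left₀ (hw0 x) (g x)

lemma integrable_mul_of_abs_le {w g c : α → ℝ} (K : ℝ)
    (hwg : Integrable (fun x => w x * g x) μ) (hc : AEStronglyMeasurable c μ)
    (hg : AEStronglyMeasurable g μ) (hg0 : ∀ x, 0 ≤ g x) (hcw : ∀ x, |c x| ≤ K * w x) :
    Integrable (fun x => c x * g x) μ := by
  refine (hwg.const_mul K).mono' (hc.mul hg) (ae_of_all _ fun x => ?_)
  rw [Real.norm_eq_abs, abs_mul, abs_of_nonneg (hg0 x), ← mul_assoc]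
  exact mul_le_mul_of_nonneg_right (hcw x) (hg0 x)

end Integrability

theorem IsIMultiplier.abs_integral_mul_sq_sub_le {N : ℝ} {m : ℝ → ℝ} (hm : IsIMultiplier N m)
    (hN : 0 < N) {g : ℝ → ℝ} (hg0 : ∀ ξ, 0 ≤ g ξ)
    (hg : Integrable (fun ξ => √(1 + ξ ^ 2) * g ξ)) :
    |(∫ ξ, ξ * (m ξ ^ 2 * g ξ)) - ∫ ξ, ξ * g ξ| ≤
      2 * N⁻¹ * ∫ ξ, (1 + ξ ^ 2) * (m ξ ^ 2 * g ξ) := by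
  have hgm : AEStronglyMeasurable g volume :=
    aestronglyMeasurable_of_mul_left hg.1 (by fun_prop)
      fun ξ => (Real.sqrt_pos.2 (by positivity)).ne'
  have hm_cont : Continuous m := hm.1.continuous
  have hS : ∀ ξ : ℝ, |ξ| ≤ √(1 + ξ ^ 2) := fun ξ => Real.abs_le_sqrt (by linarith [sq_nonneg ξ])
  have hI₁ : Integrable fun ξ => ξ * (m ξ ^ 2 * g ξ) := by
    simp_rw [← mul_assoc]
    refine integrable_mul_of_abs_le 1 hg (by fun_prop) hgm hg0 fun ξ => ?_
    rw [one_mul, abs_mul, abs_of_nonneg (sq_nonneg (m ξ))]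
    exact (mul_le_of_le_one_right (abs_nonneg ξ) (hm.sq_le_one ξ)).trans (hS ξ)
  have hI₂ : Integrable fun ξ => ξ * g ξ :=
    integrable_mul_of_abs_le 1 hg (by fun_prop) hgm hg0 fun ξ => (one_mul √(1 + ξ ^ 2)).symm ▸ hS ξ
  have hI₃ : Integrable fun ξ => (1 + ξ ^ 2) * (m ξ ^ 2 * g ξ) := by
    simp_rw [← mul_assoc]
    refine integrable_mul_of_abs_le (1 + 2 * N) hg (by fun_prop) hgm hg0 fun ξ => ?_
    rw [abs_of_nonneg (by positivity)]
    exact hm.one_add_sq_mul_sq_le hN ξ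
  have hpt : ∀ ξ, ‖ξ * (m ξ ^ 2 * g ξ) - ξ * g ξ‖ ≤ 2 * N⁻¹ * ((1 + ξ ^ 2) * (m ξ ^ 2 * g ξ)) := by
    intro ξ
    calc ‖ξ * (m ξ ^ 2 * g ξ) - ξ * g ξ‖ = |ξ| * (1 - m ξ ^ 2) * g ξ := by
          rw [Real.norm_eq_abs, show ξ * (m ξ ^ 2 * g ξ) - ξ * g ξ = -(ξ * (1 - m ξ ^ 2) * g ξ) by
            ring, abs_neg, abs_mul, abs_mul, abs_of_nonneg (sub_nonneg.2 (hm.sq_le_one ξ)), abs_of_nonneg (hg0 ξ)]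
      _ ≤ 2 * N⁻¹ * ((1 + ξ ^ 2) * m ξ ^ 2) * g ξ :=
          mul_le_mul_of_nonneg_right (hm.abs_mul_one_sub_sq_le hN ξ) (hg0 ξ)
      _ = 2 * N⁻¹ * ((1 + ξ ^ 2) * (m ξ ^ 2 * g ξ)) := by ring
  calc |(∫ ξ, ξ * (m ξ ^ 2 * g ξ)) - ∫ ξ, ξ * g ξ|
      = ‖∫ ξ, (ξ * (m ξ ^ 2 * g ξ) - ξ * g ξ)‖ := by rw [integral_sub hI₁ hI₂, Real.norm_eq_abs]
    _ ≤ ∫ ξ, 2 * N⁻¹ * ((1 + ξ ^ 2) * (m ξ ^ 2 * g ξ)) :=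
        norm_integral_le_of_norm_le (hI₃.const_mul _) (ae_of_all _ hpt)
    _ = 2 * N⁻¹ * ∫ ξ, (1 + ξ ^ 2) * (m ξ ^ 2 * g ξ) := integral_const_mul _ _

/-- The left-hand side encodes `Im ∫ w̄ ∂ₓw dx` through Plancherel as `2π ∫ ξ ‖ŵ(ξ)‖² dξ`. -/
theorem modified_momentum_first_term :
    ∃ C : ℝ, 0 < C ∧
      ∀ N : ℝ, 1 ≤ N → ∀ m : ℝ → ℝ, IsIMultiplier N m → ∀ v : ℝ → ℂ,
        Integrable (fun ξ : ℝ => (1 + |ξ| ^ 2) ^ ((1 : ℝ) / 2) * ‖𝓕 v ξ‖ ^ 2) →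
          |2 * π * (∫ ξ : ℝ, ξ * ‖(m ξ : ℂ) * 𝓕 v ξ‖ ^ 2) -
              2 * π * (∫ ξ : ℝ, ξ * ‖𝓕 v ξ‖ ^ 2)| ≤
            C * N⁻¹ * sobNormOfHat 1 (fun ξ : ℝ => (m ξ : ℂ) * 𝓕 v ξ) ^ 2 := by
  refine ⟨4 * π, by positivity, fun N hN m hm v hv => ?_⟩
  have hnorm (ξ : ℝ) : ‖(m ξ : ℂ) * 𝓕 v ξ‖ ^ 2 = m ξ ^ 2 * ‖𝓕 v ξ‖ ^ 2 := by
    rw [norm_mul, mul_pow, Complex.norm_real, Real.norm_eq_abs, sq_abs]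
  have hweight (ξ : ℝ) : (1 + |ξ| ^ 2) ^ ((1 : ℝ) / 2) = √(1 + ξ ^ 2) := by
    rw [sq_abs, Real.sqrt_eq_rpow]
  simp only [hweight] at hv
  rw [sobNormOfHat_sq, ← mul_sub, abs_mul, abs_of_pos two_pi_pos]
  simp only [hnorm, Real.rpow_one, sq_abs]
  calc 2 * π * |(∫ ξ, ξ * (m ξ ^ 2 * ‖𝓕 v ξ‖ ^ 2)) - ∫ ξ, ξ * ‖𝓕 v ξ‖ ^ 2|
      ≤ 2 * π * (2 * N⁻¹ * ∫ ξ, (1 + ξ ^ 2) * (m ξ ^ 2 * ‖𝓕 v ξ‖ ^ 2)) := by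
        gcongr
        exact hm.abs_integral_mul_sq_sub_le (by linarith) (fun ξ => sq_nonneg ‖𝓕 v ξ‖) hv
    _ = 4 * π * N⁻¹ * ∫ ξ, (1 + ξ ^ 2) * (m ξ ^ 2 * ‖𝓕 v ξ‖ ^ 2) := by ring
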